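/- Let (S,<_S,<_lex) be a lexicographically ordered Suslin tree such that the linear order (S,<_lex) is dense. Then (S,<_lex) is 2-entangled if and only if (S,<_lex) is weakly 2-entangled. -/

import Mathlib

noncomputable section

open Set

/-- The ordinal `ω₁`. -/
def omega1 : Ordinal := (Cardinal.aleph 1).ord

/-- A set-theoretic tree: a partial order in which the set of predecessors of every
node is well-ordered by the order. -/
def IsSetTree (T : Type) [PartialOrder T] : Prop :=
  ∀ t : T, IsWellOrder {s : T // s < t} (fun a b => (a : T) < (b : T))

/-- The height of a node: the order type of its set of predecessors. -/
noncomputable def nodeHt {T : Type} [PartialOrder T] (hT : IsSetTree T) (t : T) : Ordinal :=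
  @Ordinal.type {s : T // s < t} (fun a b => (a : T) < (b : T)) (hT t)

-- `restr hT t ξ` is the unique `s ≤ t` of height `ξ` (junk value `t` if there is none).
open Classical in
noncomputable def restr {T : Type} [PartialOrder T] (hT : IsSetTree T) (t : T) (ξ : Ordinal) : T :=
  if h : ∃ s : T, s ≤ t ∧ nodeHt hT s = ξ then h.choose else t

/-- Incomparability in the tree order. -/
def Incomp {T : Type} [PartialOrder T] (s t : T) : Prop := ¬ s ≤ t ∧ ¬ t ≤ s

/-- `Δ(s,t)`: the least `α` such that `s↾α ≠ t↾α`. -/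
noncomputable def delta {T : Type} [PartialOrder T] (hT : IsSetTree T) (s t : T) : Ordinal :=
  sInf {α : Ordinal | restr hT s α ≠ restr hT t α}

/-- A family of linear orders on the levels of the tree, coded as a single relation
relating only nodes of the same height. -/
def IsLevelOrderFamily {T : Type} [PartialOrder T] (hT : IsSetTree T) (lo : T → T → Prop) : Prop :=
  (∀ s t, lo s t → nodeHt hT s = nodeHt hT t) ∧
  (∀ t, ¬ lo t t) ∧
  (∀ s t u, lo s t → lo t u → lo s u) ∧
  (∀ s t, s ≠ t → nodeHt hT s = nodeHt hT t → lo s t ∨ lo t s)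

/-- The lexicographic ordering induced by the level orders `lo`:
`t <lex s` iff `t <_T s`, or `t ⊥ s` and `t↾Δ(t,s) ◁ s↾Δ(t,s)`. -/
def lexLT {T : Type} [PartialOrder T] (hT : IsSetTree T) (lo : T → T → Prop) (t s : T) : Prop :=
  t < s ∨ (Incomp t s ∧ lo (restr hT t (delta hT t s)) (restr hT s (delta hT t s)))

/-- An `ω₁`-tree: height `ω₁` and all levels countable. -/
def IsOmega1Tree {T : Type} [PartialOrder T] (hT : IsSetTree T) : Prop :=
  (∀ t : T, nodeHt hT t < omega1) ∧
  (∀ α : Ordinal, α < omega1 → ∃ t : T, nodeHt hT t = α) ∧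
  (∀ α : Ordinal, {t : T | nodeHt hT t = α}.Countable)

def NoUncountableChain (T : Type) [PartialOrder T] : Prop :=
  ∀ C : Set T, IsChain (· ≤ ·) C → C.Countable

def NoUncountableAntichain (T : Type) [PartialOrder T] : Prop :=
  ∀ A : Set T, (∀ s ∈ A, ∀ t ∈ A, s ≠ t → Incomp s t) → A.Countable

/-- An Aronszajn tree: an `ω₁`-tree with no uncountable chains. -/
def IsAronszajnTree {T : Type} [PartialOrder T] (hT : IsSetTree T) : Prop :=
  IsOmega1Tree hT ∧ NoUncountableChain T

/-- A Suslin tree: an `ω₁`-tree with no uncountable chains and no uncountable antichains. -/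
def IsSuslinTree {T : Type} [PartialOrder T] (hT : IsSetTree T) : Prop :=
  IsOmega1Tree hT ∧ NoUncountableChain T ∧ NoUncountableAntichain T

/-- A family of pairs is pairwise disjoint if distinct members are disjoint as sets. -/
def PairwiseDisjointPairs {T : Type} (A : Set (T × T)) : Prop :=
  ∀ a ∈ A, ∀ b ∈ A, a ≠ b → a.1 ≠ b.1 ∧ a.1 ≠ b.2 ∧ a.2 ≠ b.1 ∧ a.2 ≠ b.2

/-- A family of pairs is separated if some `c` lies strictly between the coordinates
of every member. -/
def SeparatedPairs {T : Type} (lt : T → T → Prop) (A : Set (T × T)) : Prop :=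
  ∃ c : T, ∀ a ∈ A, lt a.1 c ∧ lt c a.2

/-- `tpPerp hT lo a b t`: the pair `(a,b)` realizes the type `t` in the lexicographic
order and moreover `a i ⊥ b i` in the tree order, for `i < 2`. (`true` codes `<`.) -/
def tpPerp {T : Type} [PartialOrder T] (hT : IsSetTree T) (lo : T → T → Prop)
    (a b : T × T) (t : Fin 2 → Bool) : Prop :=
  Incomp a.1 b.1 ∧ Incomp a.2 b.2 ∧
  (if t 0 then lexLT hT lo a.1 b.1 else lexLT hT lo b.1 a.1) ∧
  (if t 1 then lexLT hT lo a.2 b.2 else lexLT hT lo b.2 a.2)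

/-- The weakly bi-entangled property of a lexicographically ordered tree. -/
def WeaklyBiEntangled {T : Type} [PartialOrder T] (hT : IsSetTree T) (lo : T → T → Prop) : Prop :=
  ∀ A : Set (T × T), ¬ A.Countable →
    (∀ a ∈ A, lexLT hT lo a.1 a.2) →
    PairwiseDisjointPairs A → SeparatedPairs (lexLT hT lo) A →
    ∃ ξ₀ : Ordinal, ξ₀ < omega1 ∧
      ∀ b ∈ A, ξ₀ ≤ nodeHt hT b.1 → ξ₀ ≤ nodeHt hT b.2 →
        ∀ t : Fin 2 → Bool,
          ∃ a ∈ A, nodeHt hT a.1 < ξ₀ ∧ nodeHt hT a.2 < ξ₀ ∧ tpPerp hT lo a b t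

/-- A normal family of pairs. -/
def NormalFamily {T : Type} [PartialOrder T] (hT : IsSetTree T) (lo : T → T → Prop)
    (B : Set (T × T)) : Prop :=
  ¬ B.Countable ∧
  (∀ b ∈ B, lexLT hT lo b.1 b.2) ∧
  PairwiseDisjointPairs B ∧
  (∀ b ∈ B, nodeHt hT b.1 = nodeHt hT b.2) ∧
  BddAbove {α : Ordinal | ∃ b ∈ B, α = delta hT b.1 b.2} ∧
  sSup {α : Ordinal | ∃ b ∈ B, α = delta hT b.1 b.2} <
    sInf {α : Ordinal | ∃ b ∈ B, α = nodeHt hT b.1} ∧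
  {α : Ordinal | ∃ b ∈ B, α = nodeHt hT b.1} =
    {α : Ordinal | sInf {α : Ordinal | ∃ b ∈ B, α = nodeHt hT b.1} ≤ α ∧ α < omega1}


/-- A binary relation (thought of as a strict linear order) is dense if between any
two related elements there is a third one. -/
def DenseRel {T : Type} (lt : T → T → Prop) : Prop :=
  ∀ a b : T, lt a b → ∃ c : T, lt a c ∧ lt c b

/-- `(T, lt)` is `2`-entangled: for every uncountable pairwise disjoint family of
increasing pairs and every type there are two distinct members realizing the type. -/
def TwoEntangledRel {T : Type} (lt : T → T → Prop) : Prop :=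
  ∀ A : Set (T × T), ¬ A.Countable →
    (∀ a ∈ A, lt a.1 a.2) → PairwiseDisjointPairs A →
    ∀ t : Fin 2 → Bool,
      ∃ a ∈ A, ∃ b ∈ A, a ≠ b ∧
        (if t 0 then lt a.1 b.1 else lt b.1 a.1) ∧
        (if t 1 then lt a.2 b.2 else lt b.2 a.2)

/-- `(T, lt)` is weakly `2`-entangled: the same as `2`-entangled, but only for
separated families. -/
def WeaklyTwoEntangledRel {T : Type} (lt : T → T → Prop) : Prop :=
  ∀ A : Set (T × T), ¬ A.Countable →
    (∀ a ∈ A, lt a.1 a.2) → PairwiseDisjointPairs A → SeparatedPairs lt A →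
    ∀ t : Fin 2 → Bool,
      ∃ a ∈ A, ∃ b ∈ A, a ≠ b ∧
        (if t 0 then lt a.1 b.1 else lt b.1 a.1) ∧
        (if t 1 then lt a.2 b.2 else lt b.2 a.2)

/-!
The lexicographic order of a Suslin tree with dense lexicographic order is ccc: every nonempty
interval contains a whole cone `{x | u ≤ x}` of the tree, and the roots of the cones inside
pairwise disjoint intervals form an antichain. So it suffices that in a dense ccc linear order
every uncountable pairwise disjoint family `A` of increasing pairs contains an aligned pair
(`a.1 < b.1`, `a.2 < b.2`) and a nested pair (`a.1 < b.1`, `b.2 < a.2`), the four types being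
realized by these pairs and their swaps.

If `A` has no aligned pair, any two members are nested. A ccc order has no uncountable subset in
which every point has countably many predecessors, so some `c ∈ A` lies inside uncountably many
members of `A`, and `c.1` separates them. If `A` has no nested pair, any two members are aligned.
Then the interval of every member of `A` outside a countable maximal disjoint subfamily contains
an endpoint of a member of that subfamily, so some such endpoint lies in uncountably many of these
intervals and separates the corresponding members.
In both cases weak entanglement gives the missing pair.
-/

section CountableChainCondition

variable {T : Type} {lt : T → T → Prop}

lemma PairwiseDisjointPairs.mono {A B : Set (T × T)} (hA : PairwiseDisjointPairs A) (h : B ⊆ A) :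
    PairwiseDisjointPairs B :=
  fun a ha b hb hab => hA a (h ha) b (h hb) hab

def relIoo (lt : T → T → Prop) (i : T × T) : Set T := {z | lt i.1 z ∧ lt z i.2}

def CountableChainCondition (lt : T → T → Prop) : Prop :=
  ∀ I : Set (T × T), (∀ i ∈ I, (relIoo lt i).Nonempty) → I.PairwiseDisjoint (relIoo lt) →
    I.Countable

lemma CountableChainCondition.exists_countable_meeting (hccc : CountableChainCondition lt)
    (P : Set (T × T)) (hP : ∀ p ∈ P, (relIoo lt p).Nonempty) :
    ∃ M ⊆ P, M.Countable ∧ ∀ p ∈ P, ∃ m ∈ M, (relIoo lt p ∩ relIoo lt m).Nonempty := by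
  obtain ⟨M, hM⟩ : ∃ M, Maximal (fun M => M ⊆ P ∧ M.PairwiseDisjoint (relIoo lt)) M := by
    refine zorn_subset _ fun C hC hchain => ⟨⋃₀ C, ⟨sUnion_subset fun M hM => (hC hM).1,
      (pairwiseDisjoint_sUnion hchain.directedOn).2 fun M hM => (hC hM).2⟩,
      fun M hM => subset_sUnion_of_mem hM⟩
  refine ⟨M, hM.prop.1, hccc M (fun m hm => hP m (hM.prop.1 hm)) hM.prop.2, fun p hp => ?_⟩
  by_contra! hdisj
  by_cases hpM : p ∈ M
  · exact (hP p hp).ne_empty (by simpa using hdisj p hpM)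
  refine hpM (hM.2 ⟨insert_subset hp hM.prop.1, hM.prop.2.insert fun m hm _ => ?_⟩
    (subset_insert p M) (mem_insert p M))
  exact disjoint_iff_inter_eq_empty.2 (hdisj m hm)

variable [IsStrictTotalOrder T lt]

lemma exists_forall_lt_of_countable {X E : Set T} (hX : ¬ X.Countable) (hE : E.Countable)
    (hpred : ∀ e ∈ E, {x ∈ X | lt x e}.Countable) : ∃ x ∈ X, ∀ e ∈ E, lt e x := by
  have hbad : (⋃ e ∈ E, insert e {x ∈ X | lt x e}).Countable :=
    hE.biUnion fun e he => (hpred e he).insert e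
  obtain ⟨x, hxX, hxbad⟩ := nonempty_of_not_subset fun h => hX (hbad.mono h)
  refine ⟨x, hxX, fun e he => ?_⟩
  rcases trichotomous_of lt x e with hxe | rfl | hex
  · exact absurd (mem_biUnion he (Or.inr ⟨hxX, hxe⟩)) hxbad
  · exact absurd (mem_biUnion he (mem_insert x _)) hxbad
  · exact hex

lemma CountableChainCondition.exists_uncountable_lt (hccc : CountableChainCondition lt)
    {X : Set T} (hX : ¬ X.Countable) : ∃ y ∈ X, ¬ {x ∈ X | lt x y}.Countable := by
  by_contra! hpred
  set P : Set (T × T) := {p | p.1 ∈ X ∧ p.2 ∈ X ∧ (relIoo lt p).Nonempty}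
  obtain ⟨M, hMP, hMc, hmeet⟩ := hccc.exists_countable_meeting P fun p hp => hp.2.2
  have hsndX : Prod.snd '' M ⊆ X := image_subset_iff.2 fun m hm => (hMP hm).2.1
  obtain ⟨x, hxX, hx⟩ := exists_forall_lt_of_countable hX (hMc.image Prod.snd)
    fun e he => hpred e (hsndX he)
  obtain ⟨x', hx'X, hx'⟩ := exists_forall_lt_of_countable hX (countable_singleton x)
    fun e he => hpred e (he ▸ hxX)
  obtain ⟨x'', hx''X, hx''⟩ := exists_forall_lt_of_countable hX (countable_singleton x')
    fun e he => hpred e (he ▸ hx'X)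
  -- `x'` witnesses that `(x, x'')` has a nonempty interval, which lies above all of `M`
  obtain ⟨m, hm, z, ⟨hxz, -⟩, -, hzm⟩ :=
    hmeet (x, x'') ⟨hxX, hx''X, x', hx' x rfl, hx'' x' rfl⟩
  exact irrefl_of lt x (trans_of lt hxz (trans_of lt hzm (hx m.2 (mem_image_of_mem _ hm))))

lemma CountableChainCondition.exists_aligned (hccc : CountableChainCondition lt)
    (hweak : WeaklyTwoEntangledRel lt) {A : Set (T × T)} (hA : ¬ A.Countable)
    (hinc : ∀ a ∈ A, lt a.1 a.2) (hpd : PairwiseDisjointPairs A) :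
    ∃ a ∈ A, ∃ b ∈ A, a ≠ b ∧ lt a.1 b.1 ∧ lt a.2 b.2 := by
  by_contra! hno
  have hnested : ∀ a ∈ A, ∀ b ∈ A, a ≠ b → lt a.1 b.1 → lt b.2 a.2 := fun a ha b hb hab h1 =>
    by_contra fun h2 => (hpd a ha b hb hab).2.2.2 <|
      Std.Trichotomous.trichotomous _ _ (hno a ha b hb hab h1) h2
  have hfst : ¬ (Prod.fst '' A).Countable := fun h => hA <|
    countable_of_injective_of_countable_image
      (fun a ha b hb he => by_contra fun hab => (hpd a ha b hb hab).1 he) h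
  obtain ⟨_, ⟨c, hc, rfl⟩, hunc⟩ := hccc.exists_uncountable_lt hfst
  set B := {b ∈ A | lt b.1 c.1}
  have hB : ¬ B.Countable := by
    refine fun h => hunc ((h.image Prod.fst).mono ?_)
    rintro _ ⟨⟨b, hb, rfl⟩, hlt⟩
    exact ⟨b, ⟨hb, hlt⟩, rfl⟩
  -- the members of `B` are nested around `c`, so `c.1` separates them
  have hsep : SeparatedPairs lt B := ⟨c.1, fun b hb => ⟨hb.2, trans_of lt (hinc c hc)
    (hnested b hb.1 c hc (fun h => irrefl_of lt b.1 (h ▸ hb.2)) hb.2)⟩⟩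
  obtain ⟨a, ha, b, hb, hab, h1, h2⟩ := hweak B hB (fun b hb => hinc b hb.1)
    (hpd.mono fun _ hb => hb.1) hsep fun _ => true
  exact hno a ha.1 b hb.1 hab h1 h2

lemma CountableChainCondition.exists_uncountable_mem_relIoo (hccc : CountableChainCondition lt)
    (hdense : DenseRel lt) {A : Set (T × T)} (hA : ¬ A.Countable) (hinc : ∀ a ∈ A, lt a.1 a.2)
    (hpd : PairwiseDisjointPairs A)
    (haligned : ∀ a ∈ A, ∀ b ∈ A, a ≠ b → lt a.1 b.1 → lt a.2 b.2) :
    ∃ z, ¬ {a ∈ A | z ∈ relIoo lt a}.Countable := by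
  by_contra! hcount
  obtain ⟨M, hMA, hMc, hmeet⟩ :=
    hccc.exists_countable_meeting A fun a ha => hdense a.1 a.2 (hinc a ha)
  refine hA ((hMc.union (hMc.biUnion fun m _ => (hcount m.1).union (hcount m.2))).mono ?_)
  intro a ha
  obtain ⟨m, hm, z, ⟨haz, hza⟩, hmz, hzm⟩ := hmeet a ha
  by_cases ham : a = m
  · exact Or.inl (ham ▸ hm)
  refine Or.inr (mem_biUnion hm ?_)
  -- the interval of `a` meets that of `m`, so it contains `m.1` or (by alignment) `m.2`
  rcases trichotomous_of lt a.1 m.1 with h | h | h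
  · exact Or.inl ⟨ha, h, trans_of lt hmz hza⟩
  · exact absurd h (hpd a ha m (hMA hm) ham).1
  · exact Or.inr ⟨ha, trans_of lt haz hzm, haligned m (hMA hm) a ha (Ne.symm ham) h⟩

lemma CountableChainCondition.exists_nested (hccc : CountableChainCondition lt)
    (hdense : DenseRel lt) (hweak : WeaklyTwoEntangledRel lt) {A : Set (T × T)}
    (hA : ¬ A.Countable) (hinc : ∀ a ∈ A, lt a.1 a.2) (hpd : PairwiseDisjointPairs A) :
    ∃ a ∈ A, ∃ b ∈ A, a ≠ b ∧ lt a.1 b.1 ∧ lt b.2 a.2 := by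
  by_contra! hno
  have haligned : ∀ a ∈ A, ∀ b ∈ A, a ≠ b → lt a.1 b.1 → lt a.2 b.2 := fun a ha b hb hab h1 =>
    by_contra fun h2 => (hpd a ha b hb hab).2.2.2 <|
      Std.Trichotomous.trichotomous _ _ h2 (hno a ha b hb hab h1)
  obtain ⟨z, hunc⟩ := hccc.exists_uncountable_mem_relIoo hdense hA hinc hpd haligned
  obtain ⟨a, ha, b, hb, hab, h1, h2⟩ := hweak _ hunc (fun a ha => hinc a ha.1)
    (hpd.mono fun _ ha => ha.1) ⟨z, fun a ha => ha.2⟩ ![true, false]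
  exact hno a ha.1 b hb.1 hab h1 h2

lemma CountableChainCondition.twoEntangledRel (hccc : CountableChainCondition lt)
    (hdense : DenseRel lt) (hweak : WeaklyTwoEntangledRel lt) : TwoEntangledRel lt := by
  intro A hA hinc hpd t
  obtain ⟨a, ha, b, hb, hab, hal1, hal2⟩ := hccc.exists_aligned hweak hA hinc hpd
  obtain ⟨c, hc, d, hd, hcd, hne1, hne2⟩ := hccc.exists_nested hdense hweak hA hinc hpd
  cases t 0 <;> cases t 1 <;> simp only [Bool.false_eq_true, if_true, if_false]
  · exact ⟨b, hb, a, ha, hab.symm, hal1, hal2⟩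
  · exact ⟨d, hd, c, hc, hcd.symm, hne1, hne2⟩
  · exact ⟨c, hc, d, hd, hcd, hne1, hne2⟩
  · exact ⟨a, ha, b, hb, hab, hal1, hal2⟩

end CountableChainCondition

section Tree

variable {S : Type} [PartialOrder S] (hT : IsSetTree S)

lemma nodeHt_eq_typein (t : S) (a : {s : S // s < t}) :
    nodeHt hT a.val = @Ordinal.typein _ (fun x y : {s : S // s < t} => (x : S) < y) (hT t) a := by
  have := hT t
  have := hT a.val
  rw [← Ordinal.type_subrel]
  exact Ordinal.type_eq.2 ⟨{
    toFun := fun s => ⟨⟨s.1, s.2.trans a.2⟩, s.2⟩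
    invFun := fun b => ⟨b.1.1, b.2⟩
    map_rel_iff' := Iff.rfl }⟩

lemma nodeHt_lt_of_lt {s t : S} (h : s < t) : nodeHt hT s < nodeHt hT t := by
  have := hT t
  rw [show s = (⟨s, h⟩ : {x : S // x < t}).val from rfl, nodeHt_eq_typein hT t]
  exact Ordinal.typein_lt_type _ _

lemma nodeHt_le_of_le {s t : S} (h : s ≤ t) : nodeHt hT s ≤ nodeHt hT t := by
  rcases h.eq_or_lt with rfl | h
  · exact le_rfl
  · exact (nodeHt_lt_of_lt hT h).le

lemma le_total_of_le (hT : IsSetTree S) {s s' t : S} (h : s ≤ t) (h' : s' ≤ t) : s ≤ s' ∨ s' ≤ s := by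
  rcases h.eq_or_lt with rfl | h
  · exact Or.inr h'
  rcases h'.eq_or_lt with rfl | h'
  · exact Or.inl h.le
  have := hT t
  rcases trichotomous_of (fun x y : {a : S // a < t} => (x : S) < y) ⟨s, h⟩ ⟨s', h'⟩ with
    hlt | heq | hgt
  · exact Or.inl hlt.le
  · exact Or.inl (congrArg Subtype.val heq).le
  · exact Or.inr hgt.le

lemma eq_of_le_of_nodeHt_eq {s s' t : S} (h : s ≤ t) (h' : s' ≤ t)
    (hn : nodeHt hT s = nodeHt hT s') : s = s' := by
  rcases le_total_of_le hT h h' with hle | hle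
  · exact hle.eq_of_not_lt fun hlt => (nodeHt_lt_of_lt hT hlt).ne hn
  · exact (hle.eq_of_not_lt fun hlt => (nodeHt_lt_of_lt hT hlt).ne hn.symm).symm

lemma exists_le_nodeHt_eq (t : S) {ξ : Ordinal} (h : ξ ≤ nodeHt hT t) :
    ∃ s : S, s ≤ t ∧ nodeHt hT s = ξ := by
  rcases h.eq_or_lt with rfl | h
  · exact ⟨t, le_rfl, rfl⟩
  have := hT t
  set r := fun x y : {s : S // s < t} => (x : S) < y
  refine ⟨(Ordinal.enum r ⟨ξ, h⟩).val, (Ordinal.enum r ⟨ξ, h⟩).2.le, ?_⟩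
  rw [nodeHt_eq_typein hT t]
  exact Ordinal.typein_enum r h

lemma restr_le (t : S) (ξ : Ordinal) : restr hT t ξ ≤ t := by
  unfold restr
  split_ifs with h
  exacts [h.choose_spec.1, le_rfl]

lemma nodeHt_restr {t : S} {ξ : Ordinal} (h : ξ ≤ nodeHt hT t) :
    nodeHt hT (restr hT t ξ) = ξ := by
  have hex := exists_le_nodeHt_eq hT t h
  rw [restr, dif_pos hex]
  exact hex.choose_spec.2

lemma restr_nodeHt_of_le {s t : S} (h : s ≤ t) : restr hT t (nodeHt hT s) = s :=
  eq_of_le_of_nodeHt_eq hT (restr_le hT t _) h (nodeHt_restr hT (nodeHt_le_of_le hT h))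

lemma restr_nodeHt (t : S) : restr hT t (nodeHt hT t) = t := restr_nodeHt_of_le hT le_rfl

lemma restr_of_nodeHt_lt {t : S} {ξ : Ordinal} (h : nodeHt hT t < ξ) : restr hT t ξ = t := by
  rw [restr, dif_neg]
  rintro ⟨s, hs, rfl⟩
  exact (nodeHt_le_of_le hT hs).not_gt h

lemma restr_eq_restr_of_le {u x : S} {ξ : Ordinal} (hux : u ≤ x) (hξ : ξ ≤ nodeHt hT u) :
    restr hT x ξ = restr hT u ξ := by
  conv_lhs => rw [← nodeHt_restr hT hξ]
  exact restr_nodeHt_of_le hT ((restr_le hT u ξ).trans hux)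

lemma exists_restr_ne {s t : S} (hst : s ≠ t) : ∃ α, restr hT s α ≠ restr hT t α := by
  refine ⟨Order.succ (max (nodeHt hT s) (nodeHt hT t)), ?_⟩
  rwa [restr_of_nodeHt_lt hT (Order.lt_succ_of_le (le_max_left _ _)),
    restr_of_nodeHt_lt hT (Order.lt_succ_of_le (le_max_right _ _))]

lemma restr_delta_ne {s t : S} (hst : s ≠ t) :
    restr hT s (delta hT s t) ≠ restr hT t (delta hT s t) :=
  csInf_mem (exists_restr_ne hT hst)

lemma restr_eq_of_lt_delta {s t : S} {β : Ordinal} (h : β < delta hT s t) :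
    restr hT s β = restr hT t β :=
  by_contra fun hne => (csInf_le' hne).not_gt h

lemma delta_eq {s t : S} {δ : Ordinal} (hbelow : ∀ β < δ, restr hT s β = restr hT t β)
    (hne : restr hT s δ ≠ restr hT t δ) : delta hT s t = δ :=
  le_antisymm (csInf_le' hne) (le_csInf ⟨δ, hne⟩ fun _ hβ => not_lt.1 fun h => hβ (hbelow _ h))

lemma delta_le_nodeHt_left {s t : S} (h : ¬ s ≤ t) : delta hT s t ≤ nodeHt hT s := by
  refine not_lt.1 fun hlt => h ?_
  rw [← restr_nodeHt hT s, restr_eq_of_lt_delta hT hlt]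
  exact restr_le hT t _

lemma delta_le_nodeHt_right {s t : S} (h : ¬ t ≤ s) : delta hT s t ≤ nodeHt hT t := by
  refine not_lt.1 fun hlt => h ?_
  rw [← restr_nodeHt hT t, ← restr_eq_of_lt_delta hT hlt]
  exact restr_le hT s _

lemma incomp_of_restr_ne {u w : S} {δ : Ordinal} (hu : δ ≤ nodeHt hT u) (hw : δ ≤ nodeHt hT w)
    (hne : restr hT u δ ≠ restr hT w δ) : Incomp u w :=
  ⟨fun h => hne (restr_eq_restr_of_le hT h hu).symm, fun h => hne (restr_eq_restr_of_le hT h hw)⟩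

end Tree

section LexOrder

variable {S : Type} [PartialOrder S] {hT : IsSetTree S} {lo : S → S → Prop}

lemma lexLT_of_lo_restr (hlo : IsLevelOrderFamily hT lo) {u w : S} {δ : Ordinal}
    (hu : δ ≤ nodeHt hT u) (hw : δ ≤ nodeHt hT w)
    (hbelow : ∀ β < δ, restr hT u β = restr hT w β) (hδ : lo (restr hT u δ) (restr hT w δ)) :
    lexLT hT lo u w := by
  have hne : restr hT u δ ≠ restr hT w δ := fun h => hlo.2.1 _ (h ▸ hδ)
  exact Or.inr ⟨incomp_of_restr_ne hT hu hw hne, by rwa [delta_eq hT hbelow hne]⟩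

lemma lexLT_of_lexLT_of_le (hlo : IsLevelOrderFamily hT lo) {t u x : S}
    (htu : lexLT hT lo t u) (hux : u ≤ x) : lexLT hT lo t x := by
  rcases htu with htu | ⟨hinc, hδ⟩
  · exact Or.inl (htu.trans_le hux)
  have hu := delta_le_nodeHt_right hT hinc.2
  refine lexLT_of_lo_restr hlo (delta_le_nodeHt_left hT hinc.1)
    (hu.trans (nodeHt_le_of_le hT hux)) (fun β hβ => ?_) ?_
  · rw [restr_eq_restr_of_le hT hux (hβ.le.trans hu)]
    exact restr_eq_of_lt_delta hT hβ
  · rwa [restr_eq_restr_of_le hT hux hu]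

lemma lexLT_of_le_of_lexLT (hlo : IsLevelOrderFamily hT lo) {u x t : S} (hux : u ≤ x)
    (hut : Incomp u t) (hlex : lexLT hT lo u t) : lexLT hT lo x t := by
  obtain ⟨-, hδ⟩ := hlex.resolve_left fun h => hut.1 h.le
  have hu := delta_le_nodeHt_left hT hut.1
  refine lexLT_of_lo_restr hlo (hu.trans (nodeHt_le_of_le hT hux))
    (delta_le_nodeHt_right hT hut.2) (fun β hβ => ?_) ?_
  · rw [restr_eq_restr_of_le hT hux (hβ.le.trans hu)]
    exact restr_eq_of_lt_delta hT hβ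
  · rwa [restr_eq_restr_of_le hT hux hu]

lemma lexLT_of_lt_of_lexLT (hlo : IsLevelOrderFamily hT lo) {u v w : S} (huv : u < v)
    (hvw : lexLT hT lo v w) : lexLT hT lo u w := by
  rcases hvw with hvw | ⟨hinc, hδ⟩
  · exact Or.inl (huv.trans hvw)
  by_cases hu : delta hT v w ≤ nodeHt hT u
  · refine lexLT_of_lo_restr hlo hu (delta_le_nodeHt_right hT hinc.2) (fun β hβ => ?_) ?_
    · rw [← restr_eq_restr_of_le hT huv.le (hβ.le.trans hu)]
      exact restr_eq_of_lt_delta hT hβ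
    · rwa [restr_eq_restr_of_le hT huv.le hu] at hδ
  · have huw : u ≤ w := by
      rw [← restr_nodeHt_of_le hT huv.le, restr_eq_of_lt_delta hT (not_le.1 hu)]
      exact restr_le hT w _
    exact Or.inl (huw.lt_of_ne fun h => hinc.2 (h ▸ huv.le))

lemma lexLT_trans_of_incomp (hlo : IsLevelOrderFamily hT lo) {u v w : S}
    (huv : Incomp u v) (hvw : Incomp v w)
    (h1 : lo (restr hT u (delta hT u v)) (restr hT v (delta hT u v)))
    (h2 : lo (restr hT v (delta hT v w)) (restr hT w (delta hT v w))) : lexLT hT lo u w := by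
  have hu := delta_le_nodeHt_left hT huv.1
  have hw := delta_le_nodeHt_right hT hvw.2
  rcases lt_trichotomy (delta hT u v) (delta hT v w) with hlt | heq | hgt
  · refine lexLT_of_lo_restr hlo hu (hlt.le.trans hw) (fun β hβ => ?_) ?_
    · rw [restr_eq_of_lt_delta hT hβ, restr_eq_of_lt_delta hT (hβ.trans hlt)]
    · rwa [← restr_eq_of_lt_delta hT hlt]
  · rw [← heq] at h2 hw
    refine lexLT_of_lo_restr hlo hu hw (fun β hβ => ?_) (hlo.2.2.1 _ _ _ h1 h2)
    rw [restr_eq_of_lt_delta hT hβ, restr_eq_of_lt_delta hT (heq ▸ hβ)]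
  · refine lexLT_of_lo_restr hlo (hgt.le.trans hu) hw (fun β hβ => ?_) ?_
    · rw [restr_eq_of_lt_delta hT (hβ.trans hgt), restr_eq_of_lt_delta hT hβ]
    · rwa [restr_eq_of_lt_delta hT hgt]

lemma lexLT_trans (hlo : IsLevelOrderFamily hT lo) {u v w : S} (h1 : lexLT hT lo u v)
    (h2 : lexLT hT lo v w) : lexLT hT lo u w := by
  rcases h1 with huv | ⟨huv, hδ1⟩
  · exact lexLT_of_lt_of_lexLT hlo huv h2
  rcases h2 with hvw | ⟨hvw, hδ2⟩
  · exact lexLT_of_lexLT_of_le hlo (Or.inr ⟨huv, hδ1⟩) hvw.le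
  · exact lexLT_trans_of_incomp hlo huv hvw hδ1 hδ2

lemma lexLT_irrefl (t : S) : ¬ lexLT hT lo t t :=
  fun h => h.elim (lt_irrefl t) fun h => h.1.1 le_rfl

lemma lexLT_trichotomous (hlo : IsLevelOrderFamily hT lo) (u v : S) :
    lexLT hT lo u v ∨ u = v ∨ lexLT hT lo v u := by
  by_cases huv : u = v
  · exact Or.inr (Or.inl huv)
  by_cases h1 : u ≤ v
  · exact Or.inl (Or.inl (h1.lt_of_ne huv))
  by_cases h2 : v ≤ u
  · exact Or.inr (Or.inr (Or.inl (h2.lt_of_ne (Ne.symm huv))))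
  have hu := delta_le_nodeHt_left hT h1
  have hv := delta_le_nodeHt_right hT h2
  rcases hlo.2.2.2 _ _ (restr_delta_ne hT huv)
      ((nodeHt_restr hT hu).trans (nodeHt_restr hT hv).symm) with h | h
  · exact Or.inl (Or.inr ⟨⟨h1, h2⟩, h⟩)
  · exact Or.inr (Or.inr
      (lexLT_of_lo_restr hlo hv hu (fun β hβ => (restr_eq_of_lt_delta hT hβ).symm) h))

lemma isStrictTotalOrder_lexLT (hlo : IsLevelOrderFamily hT lo) :
    IsStrictTotalOrder S (lexLT hT lo) where
  trichotomous u v huv hvu := ((lexLT_trichotomous hlo u v).resolve_left huv).resolve_right hvu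
  irrefl := lexLT_irrefl
  trans _ _ _ := lexLT_trans hlo

lemma not_lexLT_of_le (hlo : IsLevelOrderFamily hT lo) {s t : S} (h : s ≤ t) :
    ¬ lexLT hT lo t s := by
  rcases h.eq_or_lt with rfl | h
  · exact lexLT_irrefl s
  · exact fun hts => lexLT_irrefl s (lexLT_trans hlo (Or.inl h) hts)

lemma exists_cone_subset_relIoo (hlo : IsLevelOrderFamily hT lo)
    (hdense : DenseRel (lexLT hT lo)) {i : S × S} (hi : lexLT hT lo i.1 i.2) :
    ∃ u, ∀ x, u ≤ x → x ∈ relIoo (lexLT hT lo) i := by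
  obtain ⟨c, ⟨hci, hic⟩, hmin⟩ := (InvImage.wf (nodeHt hT) Ordinal.lt_wf).has_min
    {s | s ≤ i.2 ∧ lexLT hT lo i.1 s} ⟨i.2, le_rfl, hi⟩
  obtain ⟨u, hiu, huc⟩ := hdense i.1 c hic
  have hui : lexLT hT lo u i.2 := lexLT_of_lexLT_of_le hlo huc hci
  -- by minimality of `c`, the node `u` is not on the branch below `i.2`
  have hinc : Incomp u i.2 := by
    refine ⟨fun hle => ?_, fun hle => not_lexLT_of_le hlo hle hui⟩
    rcases le_total_of_le hT hle hci with huc' | hcu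
    · exact hmin u ⟨hle, hiu⟩
        (nodeHt_lt_of_lt hT (huc'.lt_of_ne fun h => lexLT_irrefl c (h ▸ huc)))
    · exact not_lexLT_of_le hlo hcu huc
  exact ⟨u, fun x hux => ⟨lexLT_of_lexLT_of_le hlo hiu hux, lexLT_of_le_of_lexLT hlo hux hinc hui⟩⟩

lemma countableChainCondition_lexLT (hlo : IsLevelOrderFamily hT lo)
    (hSus : IsSuslinTree hT) (hdense : DenseRel (lexLT hT lo)) :
    CountableChainCondition (lexLT hT lo) := by
  intro I hne hdisj
  rcases I.eq_empty_or_nonempty with rfl | ⟨i₀, -⟩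
  · exact countable_empty
  have : Nonempty S := ⟨i₀.1⟩
  have hcone : ∀ i ∈ I, ∃ u, ∀ x, u ≤ x → x ∈ relIoo (lexLT hT lo) i := fun i hi =>
    have ⟨_, hz1, hz2⟩ := hne i hi
    exists_cone_subset_relIoo hlo hdense (lexLT_trans hlo hz1 hz2)
  choose! f hf using hcone
  have hf_inj : InjOn f I := fun i hi j hj hij =>
    hdisj.elim_set hi hj (f i) (hf i hi _ le_rfl) (hij ▸ hf j hj _ le_rfl)
  refine countable_of_injective_of_countable_image hf_inj (hSus.2.2 _ ?_)
  rintro _ ⟨i, hi, rfl⟩ _ ⟨j, hj, rfl⟩ hij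
  exact ⟨fun h => hij (congrArg f (hdisj.elim_set hi hj _ (hf i hi _ h) (hf j hj _ le_rfl))),
    fun h => hij (congrArg f (hdisj.elim_set hi hj _ (hf i hi _ le_rfl) (hf j hj _ h)))⟩

end LexOrder

/-- For a lexicographically ordered Suslin tree whose lexicographic order is dense,
being `2`-entangled is equivalent to being weakly `2`-entangled. -/
theorem twoEntangled_iff_weaklyTwoEntangled {S : Type} [PartialOrder S]
    (hT : IsSetTree S) (lo : S → S → Prop) (hlo : IsLevelOrderFamily hT lo)
    (hSus : IsSuslinTree hT) (hdense : DenseRel (lexLT hT lo)) :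
    TwoEntangledRel (lexLT hT lo) ↔ WeaklyTwoEntangledRel (lexLT hT lo) := by
  have := isStrictTotalOrder_lexLT hlo
  exact ⟨fun h A hA hinc hpd _ => h A hA hinc hpd,
    (countableChainCondition_lexLT hlo hSus hdense).twoEntangledRel hdense⟩

end
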